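/- Let (X, d) be a complete bounded metric space, Z ⊆ X a closed subset, and φ: X → [0, ∞) a uniformly continuous function with Z = {x : φ(x) = 0}. Suppose for every ε > 0 there is δ > 0 such that φ(x) < δ implies d(x, Z) ≤ ε. Then there is an increasing continuous α: [0,∞) → [0,∞) with α(0) = 0 such that d(x, Z) ≤ α(φ(x)) for all x ∈ X. -/

import Mathlib

set_option maxHeartbeats 1000000 in
/-- Let X be a complete bounded metric space, Z ⊆ X closed, and
φ : X → [0,∞) uniformly continuous with Z = {x : φ(x) = 0}, satisfying the almost-near
property: for every ε > 0 there is δ > 0 such that φ(x) < δ implies d(x, Z) ≤ ε. Then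
(for any uniformly continuous F : X → ℝ) there is an increasing continuous
α : [0,∞) → [0,∞) with α(0) = 0 such that d(x, Z) ≤ α(φ(x)) for all x. -/
theorem stmt18 {X : Type*} [MetricSpace X] [CompleteSpace X]
    (hbdd : Bornology.IsBounded (Set.univ : Set X))
    (Z : Set X) (hZ : IsClosed Z)
    (φ : X → ℝ) (hφ0 : ∀ x, 0 ≤ φ x) (hφuc : UniformContinuous φ)
    (hZdef : Z = {x | φ x = 0})
    (han : ∀ ε : ℝ, 0 < ε → ∃ δ : ℝ, 0 < δ ∧ ∀ x, φ x < δ → Metric.infDist x Z ≤ ε)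
    (F : X → ℝ) (hF : UniformContinuous F) :
    ∃ α : ℝ → ℝ, Monotone α ∧ Continuous α ∧ α 0 = 0 ∧
      (∀ t, 0 ≤ t → 0 ≤ α t) ∧
      ∀ x, Metric.infDist x Z ≤ α (φ x) := by
  classical
  -- a uniform bound on infDist
  set C : ℝ := max 0 (Metric.diam (Set.univ : Set X)) with hCdef
  have hC : ∀ x : X, Metric.infDist x Z ≤ C := by
    intro x
    rcases Z.eq_empty_or_nonempty with hE | ⟨z, hz⟩
    · simp [hE, hCdef]
    · calc Metric.infDist x Z ≤ dist x z := Metric.infDist_le_dist_of_mem hz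
        _ ≤ Metric.diam (Set.univ : Set X) :=
          Metric.dist_le_diam_of_mem hbdd (Set.mem_univ _) (Set.mem_univ _)
        _ ≤ C := le_max_right _ _
  -- the "raw" modulus h
  set S : ℝ → Set ℝ := fun t => insert 0 {d | ∃ x, φ x ≤ t ∧ d = Metric.infDist x Z} with hSdef
  set h : ℝ → ℝ := fun t => sSup (S t) with hhdef
  have hSne : ∀ t, (S t).Nonempty := fun t => ⟨0, Set.mem_insert _ _⟩
  have hSbdd : ∀ t, BddAbove (S t) := by
    intro t
    refine ⟨C, ?_⟩
    rintro d (rfl | ⟨x, _, rfl⟩)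
    · exact le_max_left _ _
    · exact hC x
  have h_mono : Monotone h := by
    intro a b hab
    apply csSup_le_csSup (hSbdd b) (hSne a)
    rintro d (rfl | ⟨x, hx, rfl⟩)
    · exact Set.mem_insert _ _
    · exact Set.mem_insert_of_mem _ ⟨x, hx.trans hab, rfl⟩
  have h_nonneg : ∀ t, 0 ≤ h t := fun t => le_csSup (hSbdd t) (Set.mem_insert _ _)
  have h_ge : ∀ x : X, Metric.infDist x Z ≤ h (φ x) := fun x =>
    le_csSup (hSbdd _) (Set.mem_insert_of_mem _ ⟨x, le_refl _, rfl⟩)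
  have h_small : ∀ ε : ℝ, 0 < ε → ∃ δ : ℝ, 0 < δ ∧ ∀ t, t < δ → h t ≤ ε := by
    intro ε hε
    obtain ⟨δ, hδ, hd⟩ := han ε hε
    refine ⟨δ, hδ, fun t ht => ?_⟩
    apply csSup_le (hSne t)
    rintro d (rfl | ⟨x, hx, rfl⟩)
    · exact hε.le
    · exact hd x (lt_of_le_of_lt hx ht)
  -- integrability and primitive
  have hint : ∀ a b : ℝ, IntervalIntegrable h MeasureTheory.volume a b := fun a b =>
    (h_mono.monotoneOn _).intervalIntegrable
  set G : ℝ → ℝ := fun t => ∫ s in (0:ℝ)..t, h s with hGdef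
  have hGcont : Continuous G := intervalIntegral.continuous_primitive hint 0
  have hGnonneg : ∀ t, 0 ≤ t → 0 ≤ G t := by
    intro t ht
    exact intervalIntegral.integral_nonneg ht (fun u _ => h_nonneg u)
  -- bounds on pieces of the integral
  have hup : ∀ a b : ℝ, a ≤ b → (∫ s in a..b, h s) ≤ (b - a) * h b := by
    intro a b hab
    have := intervalIntegral.integral_mono_on (μ := MeasureTheory.volume) hab (hint a b)
      intervalIntegrable_const (g := fun _ => h b) (fun u hu => h_mono hu.2)
    simpa using this
  have hlo : ∀ a b : ℝ, a ≤ b → (b - a) * h a ≤ (∫ s in a..b, h s) := by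
    intro a b hab
    have := intervalIntegral.integral_mono_on (μ := MeasureTheory.volume) hab
      intervalIntegrable_const (hint a b) (f := fun _ => h a) (fun u hu => h_mono hu.1)
    simpa using this
  have hGsplit : ∀ a b : ℝ, G a + (∫ s in a..b, h s) = G b := by
    intro a b
    exact intervalIntegral.integral_add_adjacent_intervals (hint 0 a) (hint a b)
  -- upper bound for G : G t ≤ t * h t for t ≥ 0
  have hGup : ∀ t : ℝ, 0 ≤ t → G t ≤ t * h t := by
    intro t ht
    have := hup 0 t ht
    simpa using this
  -- the smoothed modulus
  set ψ : ℝ → ℝ := fun t => if t ≤ 0 then 0 else 2 * G (2 * t) / t with hψdef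
  have hψ_nonneg : ∀ t, 0 ≤ ψ t := by
    intro t
    by_cases htt : t ≤ 0
    · simp [hψdef, htt]
    · push_neg at htt
      simp only [hψdef, if_neg (not_le.mpr htt)]
      have : (0:ℝ) ≤ 2 * G (2 * t) := by
        have := hGnonneg (2 * t) (by linarith)
        linarith
      exact div_nonneg this htt.le
  have hψ_mono : Monotone ψ := by
    intro a b hab
    by_cases hb : b ≤ 0
    · have ha : a ≤ 0 := hab.trans hb
      simp [hψdef, ha, hb]
    · push_neg at hb
      by_cases ha : a ≤ 0
      · simp only [hψdef, if_pos ha, if_neg (not_le.mpr hb)]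
        have : (0:ℝ) ≤ 2 * G (2 * b) := by
          have := hGnonneg (2 * b) (by linarith)
          linarith
        exact div_nonneg this hb.le
      · push_neg at ha
        simp only [hψdef, if_neg (not_le.mpr hb), if_neg (not_le.mpr ha)]
        rw [div_le_div_iff₀ ha hb]
        -- t * G(2s) ≤ s * G(2t) with s = a, t = b
        have h1 : G (2 * a) ≤ 2 * a * h (2 * a) := hGup (2 * a) (by linarith)
        have h2 : (2 * b - 2 * a) * h (2 * a) ≤ ∫ s in (2*a)..(2*b), h s :=
          hlo (2 * a) (2 * b) (by linarith)
        have h3 : G (2 * a) + (∫ s in (2*a)..(2*b), h s) = G (2 * b) := hGsplit _ _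
        have h4 : 0 ≤ h (2 * a) := h_nonneg _
        nlinarith [h1, h2, h3, h4, ha, hab]
  -- the final α
  refine ⟨fun t => t + ψ t, ?_, ?_, ?_, ?_, ?_⟩
  · intro a b hab
    exact add_le_add hab (hψ_mono hab)
  · -- continuity
    have htend : Filter.Tendsto h (nhds 0) (nhds 0) := by
      rw [Metric.tendsto_nhds_nhds]
      intro ε hε
      obtain ⟨δ, hδ, hd⟩ := h_small (ε / 2) (by linarith)
      refine ⟨δ, hδ, fun t ht => ?_⟩
      rw [Real.dist_eq, sub_zero] at ht ⊢
      rw [abs_of_nonneg (h_nonneg t)]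
      have : t < δ := lt_of_le_of_lt (le_abs_self t) ht
      have := hd t this
      linarith
    have hψcont : Continuous ψ := by
      rw [continuous_iff_continuousAt]
      intro t
      rcases lt_trichotomy t 0 with htn | rfl | htp
      · -- negative: locally zero
        have hev : ψ =ᶠ[nhds t] fun _ => (0:ℝ) := by
          filter_upwards [Iio_mem_nhds htn] with u hu
          simp [hψdef, (Set.mem_Iio.mp hu).le]
        exact (continuousAt_const (y := (0:ℝ))).congr hev.symm
      · -- at zero: squeeze
        have hψ0 : ψ 0 = 0 := by simp [hψdef]
        rw [ContinuousAt, hψ0]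
        have hb : Filter.Tendsto (fun t => 4 * h (2 * t)) (nhds 0) (nhds 0) := by
          have h2t : Filter.Tendsto (fun t : ℝ => 2 * t) (nhds 0) (nhds 0) := by
            have hc : Continuous (fun t : ℝ => 2 * t) := continuous_const.mul continuous_id
            simpa using hc.tendsto 0
          have := (htend.comp h2t).const_mul 4
          simpa using this
        refine squeeze_zero hψ_nonneg ?_ hb
        intro t
        by_cases htt : t ≤ 0
        · simp only [hψdef, if_pos htt]
          have : 0 ≤ h (2 * t) := h_nonneg _
          linarith
        · push_neg at htt
          simp only [hψdef, if_neg (not_le.mpr htt)]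
          rw [div_le_iff₀ htt]
          have := hGup (2 * t) (by linarith)
          nlinarith [h_nonneg (2 * t)]
      · -- positive
        have hcont : ContinuousAt (fun u => 2 * G (2 * u) / u) t := by
          apply ContinuousAt.div
          · exact (continuous_const.mul (hGcont.comp (continuous_const.mul continuous_id))).continuousAt
          · exact continuousAt_id
          · exact ne_of_gt htp
        have hev : ψ =ᶠ[nhds t] fun u => 2 * G (2 * u) / u := by
          filter_upwards [Ioi_mem_nhds htp] with u hu
          simp [hψdef, not_le.mpr (Set.mem_Ioi.mp hu)]
        exact hcont.congr hev.symm
    exact continuous_id.add hψcont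
  · simp [hψdef]
  · intro t ht
    have := hψ_nonneg t
    show 0 ≤ t + ψ t
    linarith
  · intro x
    show Metric.infDist x Z ≤ φ x + ψ (φ x)
    set t := φ x with htdef
    rcases eq_or_lt_of_le (hφ0 x) with h0 | htp
    · -- φ x = 0, so x ∈ Z
      have hxZ : x ∈ Z := by rw [hZdef]; exact h0.symm
      have : Metric.infDist x Z = 0 := Metric.infDist_zero_of_mem hxZ
      have ht0 : t = 0 := h0.symm
      rw [this, ht0]
      simp [hψdef]
    · have h1 : Metric.infDist x Z ≤ h t := h_ge x
      have h2 : t * h t ≤ ∫ s in t..(2*t), h s := by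
        have := hlo t (2 * t) (by linarith)
        have e : (2 * t - t) = t := by ring
        rwa [e] at this
      have h3 : G t + (∫ s in t..(2*t), h s) = G (2 * t) := hGsplit _ _
      have h4 : 0 ≤ G t := hGnonneg t htp.le
      have h5 : h t ≤ 2 * G (2 * t) / t := by
        rw [le_div_iff₀ htp]
        have hcomm : h t * t = t * h t := mul_comm _ _
        have hnn : 0 ≤ t * h t := mul_nonneg htp.le (h_nonneg t)
        linarith
      have : ψ t = 2 * G (2 * t) / t := by simp [hψdef, not_le.mpr (show 0 < t from htp)]
      rw [this] at *
      calc Metric.infDist x Z ≤ h t := h1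
        _ ≤ 2 * G (2 * t) / t := h5
        _ ≤ t + 2 * G (2 * t) / t := by linarith
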